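/- For n ≥ 6 with n ≡ 0 (mod 4), writing d_n(q) = ∑_{k=1}^{β_n} A_n(k) q^k with β_n = binom(n,2) and r = n(n-1)/4, the sequence A_n(k)/A_n(β_n - k) for k = 1, ..., r-1 is strictly increasing, and A_n(r-1)/A_n(r+1) < 1. -/

import Mathlib

open Polynomial

/-- The q-derangement polynomial, defined by the recursion
`d_n(q) = (1+q+⋯+q^{n-1}) d_{n-1}(q) + (-1)^n q^{C(n,2)}` for `n ≥ 2`, with `d_1(q) = 0`. -/
noncomputable def dq : ℕ → Polynomial ℤ
  | 0 => 0
  | 1 => 0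
  | (n + 2) =>
      (∑ i ∈ Finset.range (n + 2), X ^ i) * dq (n + 1)
        + (-1) ^ (n + 2) * X ^ ((n + 2).choose 2)

/-- `A n k` is the coefficient of `q^k` in `d_n(q)`. -/
noncomputable def A (n k : ℕ) : ℤ := (dq n).coeff k

/-!
Away from the top degree, `d_{n+1} = (1 + q + ⋯ + q^n) d_n` makes the coefficients of `d_{n+1}`
window sums `a_{n+1}(k) = ∑_{k-n ≤ j ≤ k} a_n(j)`, and the reversed coefficients
`b_n(k) = a_n(C(n,2) - k)` satisfy the same rule. The cross term `a(s) b(t) - a(t) b(s)` of two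
window sums is the sum of the cross terms over the product of the two windows; the pairs in the
common square cancel by antisymmetry and every other pair has `s > t`. Hence positivity of the cross
terms for `1 ≤ t < s < C(n,2)`, i.e. strict increase of `a_n(k) / b_n(k)`, passes from `n` to
`n + 1` for `n ≥ 4`, and it holds for `n = 5` by direct computation. For `n ≡ 0 (mod 4)` we have
`C(n,2) = 2r`, and the pair `(r, r - 1)` gives `a_n(r - 1) < a_n(r + 1)`.
-/

open Finset

section Window

variable {M : Type*} [AddCommMonoid M]

noncomputable def windowSum (w : ℕ) (f : ℤ → M) (k : ℤ) : M :=
  ∑ s ∈ Ico (k - w) (k + 1), f s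

lemma windowSum_eq_sum_range (w : ℕ) (f : ℤ → M) (k : ℤ) :
    windowSum w f k = ∑ i ∈ range (w + 1), f (k - i) := by
  refine sum_nbij' (fun s ↦ (k - s).toNat) (fun i ↦ k - i) ?_ ?_ ?_ ?_ ?_ <;>
    intro x hx <;> simp only [mem_Ico, mem_range] at hx ⊢
  all_goals first | omega | congr 1; omega

lemma windowSum_reflect (w : ℕ) (f : ℤ → M) (c x : ℤ) :
    windowSum w (fun k ↦ f (c - k)) x = windowSum w f (c + w - x) := by
  refine sum_nbij' (fun s ↦ c - s) (fun u ↦ c - u) ?_ ?_ ?_ ?_ ?_ <;>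
    intro x hx <;> simp only [mem_Ico] at hx ⊢ <;> omega

end Window

section Cross

variable {R : Type*} [CommRing R] (f g : ℤ → R)

def cross (s t : ℤ) : R := f s * g t - f t * g s

lemma sum_sum_cross (U V : Finset ℤ) :
    ∑ s ∈ U, ∑ t ∈ V, cross f g s t =
      (∑ s ∈ U, f s) * (∑ t ∈ V, g t) - (∑ t ∈ V, f t) * (∑ s ∈ U, g s) := by
  simp only [cross, sum_sub_distrib, ← mul_sum, ← sum_mul]

lemma cross_windowSum (w : ℕ) {p q : ℤ} (hqp : q ≤ p) :
    cross (windowSum w f) (windowSum w g) p q =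
      ∑ x ∈ Ico (p - w) (p + 1) ×ˢ Ico (q - w) (q + 1) \
          Ico (p - w) (q + 1) ×ˢ Ico (p - w) (q + 1), (cross f g).uncurry x := by
  rw [sum_sdiff_eq_sub (product_subset_product (Ico_subset_Ico le_rfl (by omega))
    (Ico_subset_Ico (by omega) le_rfl)), sum_product, sum_product]
  simp only [Function.uncurry_apply_pair]
  rw [sum_sum_cross, sum_sum_cross, sub_self, sub_zero]
  rfl

variable [PartialOrder R] [IsOrderedRing R]

lemma cross_windowSum_pos (hf : ∀ s t, t < s → 0 ≤ cross f g s t) (w : ℕ) {p q s t : ℤ}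
    (hqp : q < p) (hs : s ∈ Icc (p - w) p) (ht : t ∈ Icc (q - w) q) (hst : q < s ∨ t < p - w)
    (hpos : 0 < cross f g s t) : 0 < cross (windowSum w f) (windowSum w g) p q := by
  rw [cross_windowSum f g w hqp.le]
  simp only [mem_Icc] at hs ht
  refine hpos.trans_le (single_le_sum (f := (cross f g).uncurry) (a := (s, t)) ?_ ?_)
  · rintro ⟨s', t'⟩ h
    simp only [mem_sdiff, mem_product, mem_Ico] at h
    exact hf _ _ (by omega)
  · simp only [mem_sdiff, mem_product, mem_Ico]
    omega

end Cross

lemma choose_two_succ (n : ℕ) : (n + 1).choose 2 = n.choose 2 + n := by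
  rw [Nat.choose_succ_succ', Nat.choose_one_right, add_comm]

lemma add_two_le_choose_two {n : ℕ} (hn : 4 ≤ n) : n + 2 ≤ n.choose 2 := by
  induction n, hn using Nat.le_induction with
  | base => decide
  | succ n _ ih => rw [choose_two_succ]; omega

-- `A n` extended by zero to negative indices, so that windows need no truncated subtraction.
noncomputable def Az (n : ℕ) (k : ℤ) : ℤ := if 0 ≤ k then A n k.toNat else 0

lemma Az_natCast (n k : ℕ) : Az n k = A n k := by simp [Az]

lemma Az_eq_zero_of_neg {n : ℕ} {k : ℤ} (hk : k < 0) : Az n k = 0 := by simp [Az, hk.not_ge]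

lemma Az_eq_zero_of_le_one {n : ℕ} (hn : n ≤ 1) (k : ℤ) : Az n k = 0 := by
  interval_cases n <;> simp [Az, A, dq]

lemma Az_succ {n : ℕ} (hn : 1 ≤ n) (k : ℤ) :
    Az (n + 1) k = windowSum n (Az n) k + if k = n.choose 2 + n then (-1) ^ (n + 1) else 0 := by
  obtain ⟨m, rfl⟩ : ∃ m, n = m + 1 := ⟨n - 1, by omega⟩
  rw [windowSum_eq_sum_range]
  rcases lt_or_ge k 0 with hk | hk
  · rw [Az_eq_zero_of_neg hk, sum_eq_zero fun i _ ↦ Az_eq_zero_of_neg (by omega),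
      if_neg (by omega), add_zero]
  obtain ⟨k, rfl⟩ := Int.eq_ofNat_of_zero_le hk
  rw [Az_natCast, A, dq, coeff_add, sum_mul, finsetSum_coeff]
  congr 1
  · refine sum_congr rfl fun i _ ↦ ?_
    rw [mul_comm, coeff_mul_X_pow']
    split_ifs with hik
    · rw [← Nat.cast_sub hik, Az_natCast, A]
    · rw [Az_eq_zero_of_neg (by omega)]
  · rw [← C_1, ← C_neg, ← C_pow, coeff_C_mul_X_pow, choose_two_succ]
    simp only [← Nat.cast_inj (R := ℤ)]
    push_cast
    rfl

lemma Az_succ_of_ne {n : ℕ} (hn : 1 ≤ n) {k : ℤ} (hk : k ≠ n.choose 2 + n) :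
    Az (n + 1) k = windowSum n (Az n) k := by
  rw [Az_succ hn, if_neg hk, add_zero]

lemma Az_eq_zero_of_nonpos (n : ℕ) {k : ℤ} (hk : k ≤ 0) : Az n k = 0 := by
  induction n generalizing k with
  | zero => exact Az_eq_zero_of_le_one zero_le_one k
  | succ n ih =>
    rcases Nat.eq_zero_or_pos n with rfl | hn
    · exact Az_eq_zero_of_le_one le_rfl k
    rw [Az_succ_of_ne hn (by omega)]
    exact sum_eq_zero fun s hs ↦ ih (by simp only [mem_Ico] at hs; omega)

lemma Az_eq_zero_of_choose_two_lt (n : ℕ) {k : ℤ} (hk : n.choose 2 < k) : Az n k = 0 := by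
  induction n generalizing k with
  | zero => exact Az_eq_zero_of_le_one zero_le_one k
  | succ n ih =>
    rcases Nat.eq_zero_or_pos n with rfl | hn
    · exact Az_eq_zero_of_le_one le_rfl k
    push_cast [choose_two_succ] at hk
    rw [Az_succ_of_ne hn (by omega)]
    exact sum_eq_zero fun s hs ↦ ih (by simp only [mem_Ico] at hs; omega)

lemma Az_choose_two {n : ℕ} (hn : 1 ≤ n) : Az n (n.choose 2) = if Even n then 1 else 0 := by
  induction n, hn using Nat.le_induction with
  | base => simp [Az_eq_zero_of_le_one]
  | succ n hn ih =>
    have hwindow : windowSum n (Az n) (n.choose 2 + n) = Az n (n.choose 2) := by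
      refine sum_eq_single_of_mem _ (by simp only [mem_Ico]; omega) fun s hs hne ↦ ?_
      simp only [mem_Ico] at hs
      exact Az_eq_zero_of_choose_two_lt n (by omega)
    push_cast [choose_two_succ]
    rw [Az_succ hn, if_pos rfl, hwindow, ih]
    rcases Nat.even_or_odd n with he | ho
    · simp [he, he.add_one, pow_succ, he.neg_one_pow]
    · simp [Nat.not_even_iff_odd.2 ho, ho.add_one, pow_succ, ho.neg_one_pow]

lemma Az_nonneg (n : ℕ) (k : ℤ) : 0 ≤ Az n k := by
  induction n generalizing k with
  | zero => exact (Az_eq_zero_of_le_one zero_le_one k).ge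
  | succ n ih =>
    rcases Nat.eq_zero_or_pos n with rfl | hn
    · exact (Az_eq_zero_of_le_one le_rfl k).ge
    by_cases hk : k = n.choose 2 + n
    · rw [hk, ← Nat.cast_add, ← choose_two_succ, Az_choose_two (by omega)]
      split_ifs <;> norm_num
    · rw [Az_succ_of_ne hn hk]
      exact sum_nonneg fun s _ ↦ ih s

lemma dq_five : dq 5 = X + 3 * X ^ 2 + 5 * X ^ 3 + 7 * X ^ 4 + 8 * X ^ 5 + 8 * X ^ 6 + 6 * X ^ 7
    + 4 * X ^ 8 + 2 * X ^ 9 := by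
  simp only [dq, sum_range_succ, range_one, sum_singleton, Nat.choose]
  ring

/-- Cross-multiplied form of `A n t / A n (C - t) < A n s / A n (C - s)` for
`1 ≤ t < s < C`, where `C = n.choose 2`. -/
def HasIncreasingRatios (n : ℕ) : Prop :=
  ∀ s t : ℤ, 1 ≤ t → t < s → s < n.choose 2 →
    0 < cross (Az n) (fun k ↦ Az n (n.choose 2 - k)) s t

lemma hasIncreasingRatios_five : HasIncreasingRatios 5 := by
  intro s t ht hts hs
  rw [show ((5 : ℕ).choose 2 : ℤ) = 10 by rfl] at hs ⊢
  have hs₀ : 2 ≤ s := by omega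
  interval_cases s <;> interval_cases t <;>
    simp [cross, Az, A, dq_five, coeff_X, coeff_X_pow]

namespace HasIncreasingRatios

lemma cross_nonneg {n : ℕ} (h : HasIncreasingRatios n) {s t : ℤ} (hts : t < s) :
    0 ≤ cross (Az n) (fun k ↦ Az n (n.choose 2 - k)) s t := by
  have hprod := mul_nonneg (Az_nonneg n s) (Az_nonneg n (n.choose 2 - t))
  simp only [cross]
  rcases le_or_gt t 0 with ht | ht
  · rwa [Az_eq_zero_of_nonpos n ht, zero_mul, sub_zero]
  rcases le_or_gt (n.choose 2 : ℤ) s with hs | hs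
  · rwa [Az_eq_zero_of_nonpos n (k := n.choose 2 - s) (by omega), mul_zero, sub_zero]
  exact (h s t ht hts hs).le

lemma succ {n : ℕ} (h : HasIncreasingRatios n) (hn : 4 ≤ n) : HasIncreasingRatios (n + 1) := by
  have hnC : (n + 2 : ℤ) ≤ n.choose 2 := by exact_mod_cast add_two_le_choose_two hn
  intro p q hq hqp hp
  push_cast [choose_two_succ] at hp ⊢
  set C : ℤ := (n.choose 2 : ℤ)
  have hwindow (x : ℤ) (hx : 1 ≤ x) (hxC : x < C + n) :
      Az (n + 1) x = windowSum n (Az n) x ∧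
        Az (n + 1) (C + n - x) = windowSum n (fun k ↦ Az n (C - k)) x := by
    rw [Az_succ_of_ne (by omega) (by omega), Az_succ_of_ne (by omega) (by omega),
      windowSum_reflect]
    exact ⟨rfl, rfl⟩
  have hcross : cross (Az (n + 1)) (fun k ↦ Az (n + 1) (C + n - k)) p q =
      cross (windowSum n (Az n)) (windowSum n fun k ↦ Az n (C - k)) p q := by
    obtain ⟨hp₁, hp₂⟩ := hwindow p (by omega) hp
    obtain ⟨hq₁, hq₂⟩ := hwindow q hq (by omega)
    simp only [cross, hp₁, hp₂, hq₁, hq₂]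
  rw [hcross]
  have hwitness (s t : ℤ) (ht : 1 ≤ t) (hts : t < s) (hs : s < C) (hsp : s ∈ Icc (p - n) p)
      (htq : t ∈ Icc (q - n) q) (hout : q < s ∨ t < p - n) :
      0 < cross (windowSum n (Az n)) (windowSum n fun k ↦ Az n (C - k)) p q :=
    cross_windowSum_pos _ _ (fun _ _ ↦ h.cross_nonneg) n hqp hsp htq hout (h s t ht hts hs)
  simp only [mem_Icc] at hwitness
  rcases lt_or_ge p C with hpC | hpC
  · exact hwitness p q hq hqp hpC (by omega) (by omega) (by omega)
  -- In the last case `C ≥ n + 2` keeps `p - n - 1 ≥ 1`.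
  rcases lt_or_ge q (C - 1) with hqC | hqC
  · exact hwitness (C - 1) q hq hqC (by omega) (by omega) (by omega) (by omega)
  · exact hwitness (C - 1) (p - n - 1) (by omega) (by omega) (by omega) (by omega) (by omega)
      (by omega)

lemma Az_pos {n : ℕ} (h : HasIncreasingRatios n) {k : ℤ} (hk : 2 ≤ k) (hkC : k < n.choose 2) :
    0 < Az n k := by
  have hcross := h k 1 le_rfl (by omega) hkC
  simp only [cross] at hcross
  have hprod : 0 < Az n k * Az n (n.choose 2 - 1) :=
    lt_of_lt_of_le hcross (sub_le_self _ (mul_nonneg (Az_nonneg n 1) (Az_nonneg n _)))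
  exact pos_of_mul_pos_left hprod (Az_nonneg n _)

end HasIncreasingRatios

lemma hasIncreasingRatios {n : ℕ} (hn : 5 ≤ n) : HasIncreasingRatios n := by
  induction n, hn using Nat.le_induction with
  | base => exact hasIncreasingRatios_five
  | succ n hn ih => exact ih.succ (by omega)

lemma A_div_A_lt_A_div_A {n k : ℕ} (hn : 5 ≤ n) (hk : 1 ≤ k) (hkC : k + 3 ≤ n.choose 2) :
    (A n k : ℚ) / A n (n.choose 2 - k) < A n (k + 1) / A n (n.choose 2 - (k + 1)) := by
  have h := hasIncreasingRatios hn
  have hcross := h (k + 1) k (by omega) (by omega) (by omega)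
  simp only [cross] at hcross
  simp only [← Az_natCast]
  rw [Nat.cast_sub (R := ℤ) (show k ≤ n.choose 2 by omega),
    Nat.cast_sub (R := ℤ) (show k + 1 ≤ n.choose 2 by omega), Nat.cast_add_one,
    div_lt_div_iff₀ (by exact_mod_cast h.Az_pos (k := n.choose 2 - k) (by omega) (by omega))
      (by exact_mod_cast h.Az_pos (k := n.choose 2 - (k + 1)) (by omega) (by omega))]
  exact_mod_cast (by linarith :
    Az n k * Az n (n.choose 2 - (k + 1)) < Az n (k + 1) * Az n (n.choose 2 - k))

lemma A_sub_one_div_A_add_one_lt_one {n r : ℕ} (hn : 5 ≤ n) (hr : n.choose 2 = 2 * r) :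
    (A n (r - 1) : ℚ) / A n (r + 1) < 1 := by
  have h := hasIncreasingRatios hn
  have hr₄ : 4 ≤ r := by have := add_two_le_choose_two (n := n) (by omega); omega
  have hcross := h r (r - 1) (by omega) (by omega) (by omega)
  simp only [cross, hr] at hcross
  push_cast at hcross
  rw [show (2 * r - (r - 1) : ℤ) = r + 1 by ring, show (2 * r - r : ℤ) = r by ring] at hcross
  have hlt : 0 < Az n r * (Az n (r + 1) - Az n (r - 1)) := by linarith
  simp only [← Az_natCast]
  push_cast [Nat.cast_sub (show 1 ≤ r by omega)]
  rw [div_lt_one (by exact_mod_cast h.Az_pos (k := r + 1) (by omega) (by omega))]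
  exact_mod_cast sub_pos.1 (pos_of_mul_pos_right hlt (Az_nonneg n r))

theorem stmt_16 (n : ℕ) (hn : 6 ≤ n) (hmod : n % 4 = 0) :
    (∀ k, 1 ≤ k → k + 1 ≤ n * (n - 1) / 4 - 1 →
      (A n k : ℚ) / (A n (n.choose 2 - k) : ℚ) <
        (A n (k + 1) : ℚ) / (A n (n.choose 2 - (k + 1)) : ℚ)) ∧
    (A n (n * (n - 1) / 4 - 1) : ℚ) / (A n (n * (n - 1) / 4 + 1) : ℚ) < 1 := by
  have hC : n.choose 2 = 2 * (n * (n - 1) / 4) := by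
    obtain ⟨m, rfl⟩ := Nat.dvd_of_mod_eq_zero hmod
    rw [Nat.choose_two_right, mul_assoc]
    omega
  exact ⟨fun k hk hkr ↦ A_div_A_lt_A_div_A (by omega) hk (by omega),
    A_sub_one_div_A_add_one_lt_one (by omega) hC⟩
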